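/- Let f : ℝ^n → ℝ be locally Lipschitz, x ∈ ℝ^n, ε > 0, δ ≥ 0, and let A ⊆ ∂_ε f(x) be a nonempty closed convex set with ∂_ε f(x) ⊆ A + closedBall(0, δ). Let g̃ be the minimal-norm element of A, let 0 < β < 1, and suppose δ ≤ (1−β)‖g̃‖. Then for all 0 ≤ t ≤ ε/‖g̃‖, f(x − t g̃) ≤ f(x) − β t ‖g̃‖². -/

import Mathlib

open Filter Topology Pointwise

/-- The Goldstein ε-subgradient: the closed convex hull of all limits of gradients of `f`
at differentiability points converging to some point within distance `ε` of `x`. -/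
noncomputable def goldstein {n : ℕ} (f : EuclideanSpace ℝ (Fin n) → ℝ) (ε : ℝ)
    (x : EuclideanSpace ℝ (Fin n)) : Set (EuclideanSpace ℝ (Fin n)) :=
  closure (convexHull ℝ {g | ∃ x' : EuclideanSpace ℝ (Fin n), ‖x' - x‖ ≤ ε ∧
    ∃ u : ℕ → EuclideanSpace ℝ (Fin n),
      Tendsto u atTop (𝓝 x') ∧ (∀ i, DifferentiableAt ℝ f (u i)) ∧
      Tendsto (fun i => gradient f (u i)) atTop (𝓝 g)})

/-
By Rademacher's theorem and Fubini, for almost every `y` the map `s ↦ f (y - s • g)` is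
differentiable at almost every `s`; being locally Lipschitz it is absolutely continuous, so the
fundamental theorem of calculus bounds its decrease by the essential bound on its derivative.
Such `y` are dense and `f` is continuous, so the bound passes to `x`, and then by closedness in
`t` to the endpoint `t = ε / ‖g‖`. The derivative bound itself comes from the cover: a gradient
at a point within `ε` of `x` lies in `A + closedBall 0 δ`, and the projection inequality
`‖g‖ ^ 2 ≤ ⟪a, g⟫` on `A` gives `⟪∇f z, g⟫ ≥ ‖g‖ ^ 2 - δ * ‖g‖ ≥ β * ‖g‖ ^ 2`.
-/

open MeasureTheory Set Metric

theorem LocallyLipschitz.sub_le_mul_of_ae_deriv_le {φ : ℝ → ℝ} (hφ : LocallyLipschitz φ)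
    {a b c : ℝ} (hab : a ≤ b) (hderiv : ∀ᵐ s, s ∈ Icc a b → deriv φ s ≤ c) :
    φ b - φ a ≤ c * (b - a) := by
  obtain ⟨K, hK⟩ :=
    hφ.locallyLipschitzOn.exists_lipschitzOnWith_of_compact (isCompact_uIcc (a := a) (b := b))
  have hac := hK.absolutelyContinuousOnInterval
  rw [← hac.integral_deriv_eq_sub]
  calc ∫ s in a..b, deriv φ s ≤ ∫ _ in a..b, c :=
        intervalIntegral.integral_mono_ae_restrict hab hac.intervalIntegrable_deriv
          intervalIntegrable_const ((ae_restrict_iff' measurableSet_Icc).2 hderiv)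
    _ = c * (b - a) := by simp [mul_comm]

section LineRestriction

variable {E : Type*} [NormedAddCommGroup E] [NormedSpace ℝ E]

theorem LocallyLipschitz.ae_differentiableAt [FiniteDimensional ℝ E] [MeasurableSpace E]
    [BorelSpace E] {F : Type*} [NormedAddCommGroup F] [NormedSpace ℝ F] [FiniteDimensional ℝ F]
    (μ : Measure E) [μ.IsAddHaarMeasure] {f : E → F} (hf : LocallyLipschitz f) :
    ∀ᵐ z ∂μ, DifferentiableAt ℝ f z := by
  refine measure_null_of_locally_null _ fun z _ => ?_
  obtain ⟨K, t, ht, hK⟩ := hf z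
  refine ⟨_ ∩ interior t, inter_mem_nhdsWithin _ (interior_mem_nhds.2 ht),
    measure_eq_zero_iff_ae_notMem.2 ?_⟩
  filter_upwards [hK.ae_differentiableWithinAt_of_mem (μ := μ)] with y hy ⟨hyf, hyt⟩
  exact hyf ((hy (interior_subset hyt)).differentiableAt (mem_interior_iff_mem_nhds.1 hyt))

theorem ae_ae_sub_smul [MeasurableSpace E] [BorelSpace E] [SecondCountableTopology E]
    (μ : Measure E) [μ.IsAddRightInvariant] [SFinite μ] {p : E → Prop}
    (hp : ∀ᵐ z ∂μ, p z) (v : E) : ∀ᵐ y ∂μ, ∀ᵐ s : ℝ, p (y - s • v) := by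
  obtain ⟨N, hpN, hNmeas, hN⟩ := exists_measurable_superset_of_null hp
  have hline : (μ.prod volume) ((fun q : E × ℝ => q.1 - q.2 • v) ⁻¹' N) = 0 := by
    rw [Measure.prod_apply_symm (hNmeas.preimage (by fun_prop))]
    simp [preimage_preimage, sub_eq_add_neg, measure_preimage_add_right, hN]
  filter_upwards [Measure.ae_ae_of_ae_prod (measure_eq_zero_iff_ae_notMem.1 hline)] with y hy
  filter_upwards [hy] with s hs
  by_contra h
  exact hs (hpN h)

theorem LocallyLipschitz.apply_sub_smul_le_of_ae_differentiableAt {f : E → ℝ}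
    (hf : LocallyLipschitz f) {y v : E} {c t : ℝ} (ht : 0 ≤ t)
    (hdiff : ∀ᵐ s : ℝ, DifferentiableAt ℝ f (y - s • v))
    (hc : ∀ s ∈ Icc 0 t, DifferentiableAt ℝ f (y - s • v) → c ≤ fderiv ℝ f (y - s • v) v) :
    f (y - t • v) ≤ f y - c * t := by
  have hline : ContDiff ℝ 1 fun s : ℝ => y - s • v := by fun_prop
  have hderiv : ∀ᵐ s, s ∈ Icc 0 t → deriv (f ∘ fun s : ℝ => y - s • v) s ≤ -c := by
    filter_upwards [hdiff] with s hs hst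
    have hline' : HasDerivAt (fun s : ℝ => y - s • v) (-v) s := by
      simpa using ((hasDerivAt_id s).smul_const v).const_sub y
    rw [(hs.hasFDerivAt.comp_hasDerivAt s hline').deriv, map_neg, neg_le_neg_iff]
    exact hc s hst hs
  have := (hf.comp hline.locallyLipschitz).sub_le_mul_of_ae_deriv_le ht hderiv
  simp only [Function.comp_apply, zero_smul, sub_zero] at this
  linarith

variable [FiniteDimensional ℝ E]

theorem LocallyLipschitz.apply_sub_smul_le_of_forall_ball {f : E → ℝ}
    (hf : LocallyLipschitz f) {x v : E} {ε c t : ℝ}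
    (hc : ∀ z ∈ ball x ε, DifferentiableAt ℝ f z → c ≤ fderiv ℝ f z v)
    (ht : 0 ≤ t) (htε : t * ‖v‖ < ε) : f (x - t • v) ≤ f x - c * t := by
  borelize E
  have hfc := hf.continuous
  set r := ε - t * ‖v‖
  have hdense : Dense {y | ∀ᵐ s : ℝ, DifferentiableAt ℝ f (y - s • v)} :=
    Measure.dense_of_ae (ae_ae_sub_smul Measure.addHaar (hf.ae_differentiableAt _) v)
  have hclosed : IsClosed {y | f (y - t • v) ≤ f y - c * t} :=
    isClosed_le (by fun_prop) (by fun_prop)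
  suffices ball x r ∩ {y | ∀ᵐ s : ℝ, DifferentiableAt ℝ f (y - s • v)} ⊆
      {y | f (y - t • v) ≤ f y - c * t} from
    hclosed.closure_subset_iff.2 this
      (hdense.open_subset_closure_inter isOpen_ball (mem_ball_self (by linarith)))
  rintro y ⟨hy, hydiff⟩
  refine hf.apply_sub_smul_le_of_ae_differentiableAt ht hydiff fun s hs => hc _ ?_
  rw [mem_ball_iff_norm] at hy ⊢
  calc ‖y - s • v - x‖ ≤ ‖y - x‖ + s * ‖v‖ := by
        rw [sub_right_comm]
        refine (norm_sub_le _ _).trans_eq ?_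
        rw [norm_smul, Real.norm_of_nonneg hs.1]
    _ < r + t * ‖v‖ := add_lt_add_of_lt_of_le hy (by gcongr; exact hs.2)
    _ = ε := by ring

theorem LocallyLipschitz.apply_sub_smul_le_of_forall_closedBall {f : E → ℝ}
    (hf : LocallyLipschitz f) {x v : E} {ε c t : ℝ} (hε : 0 < ε)
    (hc : ∀ z ∈ closedBall x ε, DifferentiableAt ℝ f z → c ≤ fderiv ℝ f z v)
    (ht : 0 ≤ t) (htε : t * ‖v‖ ≤ ε) : f (x - t • v) ≤ f x - c * t := by
  have hball : ∀ s, 0 ≤ s → s * ‖v‖ < ε → f (x - s • v) ≤ f x - c * s := fun s hs hsε =>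
    hf.apply_sub_smul_le_of_forall_ball (fun z hz => hc z (ball_subset_closedBall hz)) hs hsε
  rcases htε.lt_or_eq with hlt | heq
  · exact hball t ht hlt
  have hfc := hf.continuous
  have htv : 0 < t * ‖v‖ := heq ▸ hε
  have hclosed : IsClosed {s : ℝ | f (x - s • v) ≤ f x - c * s} :=
    isClosed_le (by fun_prop) (by fun_prop)
  suffices Ico 0 t ⊆ {s : ℝ | f (x - s • v) ≤ f x - c * s} by
    have := hclosed.closure_subset_iff.2 this
    rw [closure_Ico (pos_of_mul_pos_left htv (norm_nonneg v)).ne] at this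
    exact this ⟨ht, le_rfl⟩
  intro s hs
  refine hball s hs.1 ?_
  rw [← heq]
  exact mul_lt_mul_of_pos_right hs.2 (pos_of_mul_pos_right htv ht)

end LineRestriction

theorem Convex.norm_sq_le_inner_of_forall_norm_le {F : Type*} [NormedAddCommGroup F]
    [InnerProductSpace ℝ F] {A : Set F} (hA : Convex ℝ A) {g : F} (hg : g ∈ A)
    (hmin : ∀ w ∈ A, ‖g‖ ≤ ‖w‖) {a : F} (ha : a ∈ A) : ‖g‖ ^ 2 ≤ inner ℝ a g := by
  have : Nonempty A := ⟨⟨g, hg⟩⟩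
  have hinf : ‖0 - g‖ = ⨅ w : A, ‖0 - (w : F)‖ :=
    le_antisymm (le_ciInf fun w => by simpa using hmin w w.2)
      (ciInf_le (f := fun w : A => ‖0 - (w : F)‖) ⟨0, by rintro r ⟨w, rfl⟩; positivity⟩ ⟨g, hg⟩)
  have := (norm_eq_iInf_iff_real_inner_le_zero hA hg).1 hinf a ha
  rw [zero_sub, inner_neg_left, inner_sub_right, real_inner_self_eq_norm_sq,
    real_inner_comm] at this
  linarith

theorem sub_mul_le_inner_of_mem_add_closedBall {F : Type*} [NormedAddCommGroup F]
    [InnerProductSpace ℝ F] {A : Set F} {g w : F} {δ : ℝ}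
    (hA : ∀ a ∈ A, ‖g‖ ^ 2 ≤ inner ℝ a g) (hw : w ∈ A + closedBall 0 δ) :
    ‖g‖ ^ 2 - δ * ‖g‖ ≤ inner ℝ w g := by
  obtain ⟨a, ha, e, he, rfl⟩ := hw
  have he' : |inner ℝ e g| ≤ δ * ‖g‖ :=
    (abs_real_inner_le_norm e g).trans (by gcongr; exact mem_closedBall_zero_iff.1 he)
  rw [inner_add_left]
  linarith [hA a ha, neg_abs_le (inner ℝ e g)]

theorem gradient_mem_goldstein {n : ℕ} {f : EuclideanSpace ℝ (Fin n) → ℝ} {ε : ℝ}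
    {x z : EuclideanSpace ℝ (Fin n)} (hz : ‖z - x‖ ≤ ε) (hf : DifferentiableAt ℝ f z) :
    gradient f z ∈ goldstein f ε x :=
  subset_closure <| subset_convexHull ℝ _
    ⟨z, hz, fun _ => z, tendsto_const_nhds, fun _ => hf, tendsto_const_nhds⟩

theorem stmt9_general {n : ℕ} (f : EuclideanSpace ℝ (Fin n) → ℝ) (hf : LocallyLipschitz f)
    (x : EuclideanSpace ℝ (Fin n)) (ε δ β : ℝ) (hε : 0 < ε)
    (A : Set (EuclideanSpace ℝ (Fin n)))
    (hAco : Convex ℝ A)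
    (hcover : goldstein f ε x ⊆ A + Metric.closedBall (0 : EuclideanSpace ℝ (Fin n)) δ)
    (g : EuclideanSpace ℝ (Fin n)) (hgA : g ∈ A) (hgmin : ∀ w ∈ A, ‖g‖ ≤ ‖w‖)
    (hδg : δ ≤ (1 - β) * ‖g‖) :
    ∀ t : ℝ, 0 ≤ t → t ≤ ε / ‖g‖ → f (x - t • g) ≤ f x - β * t * ‖g‖ ^ 2 := by
  intro t ht htε
  have hdescent : ∀ z ∈ closedBall x ε, DifferentiableAt ℝ f z →
      β * ‖g‖ ^ 2 ≤ fderiv ℝ f z g := by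
    intro z hz hdiff
    have hgrad := sub_mul_le_inner_of_mem_add_closedBall
      (fun a ha => hAco.norm_sq_le_inner_of_forall_norm_le hgA hgmin ha)
      (hcover (gradient_mem_goldstein (mem_closedBall_iff_norm.1 hz) hdiff))
    rw [inner_gradient_left] at hgrad
    nlinarith [mul_le_mul_of_nonneg_right hδg (norm_nonneg g)]
  have := hf.apply_sub_smul_le_of_forall_closedBall hε hdescent ht
    (mul_le_of_le_div₀ hε.le (norm_nonneg g) htε)
  linarith

theorem stmt9 {n : ℕ} (f : EuclideanSpace ℝ (Fin n) → ℝ) (hf : LocallyLipschitz f)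
    (x : EuclideanSpace ℝ (Fin n)) (ε δ β : ℝ) (hε : 0 < ε) (hδ : 0 ≤ δ)
    (hβ0 : 0 < β) (hβ1 : β < 1)
    (A : Set (EuclideanSpace ℝ (Fin n)))
    (hAne : A.Nonempty) (hAcl : IsClosed A) (hAco : Convex ℝ A)
    (hAsub : A ⊆ goldstein f ε x)
    (hcover : goldstein f ε x ⊆ A + Metric.closedBall (0 : EuclideanSpace ℝ (Fin n)) δ)
    (g : EuclideanSpace ℝ (Fin n)) (hgA : g ∈ A) (hgmin : ∀ w ∈ A, ‖g‖ ≤ ‖w‖)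
    (hδg : δ ≤ (1 - β) * ‖g‖) :
    ∀ t : ℝ, 0 ≤ t → t ≤ ε / ‖g‖ → f (x - t • g) ≤ f x - β * t * ‖g‖ ^ 2 :=
  stmt9_general f hf x ε δ β hε A hAco hcover g hgA hgmin hδg
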